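/- The index of convergence of a strongly connected primitive digraph on n ≥ 2 nodes is at most (n-1)² + 1; that is, for every pair of nodes (i,j) and every k ≥ (n-1)² + 1, there is a walk of length k from i to j. -/

import Mathlib

/-- `f` lists the successive nodes of a walk of length `k` in the digraph with
edge relation `E`. -/
def IsGWalk {n : ℕ} (E : Fin n → Fin n → Prop) {k : ℕ} (f : Fin (k + 1) → Fin n) : Prop :=
  ∀ t : Fin k, E (f t.castSucc) (f t.succ)

/-- A cycle: a nonempty closed walk in which only the start and end node coincide. -/
def IsGCycle {n : ℕ} (E : Fin n → Fin n → Prop) {k : ℕ} (f : Fin (k + 1) → Fin n) : Prop :=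
  0 < k ∧ IsGWalk E f ∧ f 0 = f (Fin.last k) ∧
    Function.Injective (fun t : Fin k => f t.castSucc)

/-!
Let `C` be a shortest cycle, of length `s`; primitivity forces `s ≤ n - 1`. From `i` a walk of
length `d ≤ n - s` reaches `C`, and winding around `C` reaches a vertex of `C` after any longer
length. From a vertex `w` of `C` every `j` is reachable in exactly `s (n - 1)` steps: since the
closed-walk lengths at `j` have gcd `1`, some walk `w → j` has length divisible by `s`, i.e. is a
walk in the `s`-th power graph, where it shortens to at most `n - 1` steps and the loop at `w`
pads it to exactly `n - 1`. Finally `d + s (n - 1) ≤ (n - 1)² + 1`.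
-/

section Walk

variable {V : Type*} {E : V → V → Prop} {i j l : V} {a b k : ℕ}

def HasWalk (E : V → V → Prop) (k : ℕ) (i j : V) : Prop :=
  ∃ f : ℕ → V, f 0 = i ∧ f k = j ∧ ∀ t < k, E (f t) (f (t + 1))

theorem hasWalk_zero_iff : HasWalk E 0 i j ↔ i = j := by
  constructor
  · rintro ⟨f, rfl, rfl, -⟩
    rfl
  · rintro rfl
    exact ⟨fun _ => i, rfl, rfl, by simp⟩

theorem hasWalk_zero (i : V) : HasWalk E 0 i i :=
  hasWalk_zero_iff.2 rfl

theorem hasWalk_of_rel_self (h : E i i) (k : ℕ) : HasWalk E k i i :=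
  ⟨fun _ => i, rfl, rfl, fun _ _ => h⟩

theorem hasWalk_segment {f : ℕ → V} (hf : ∀ t < k, E (f t) (f (t + 1))) (hab : a ≤ b)
    (hbk : b ≤ k) : HasWalk E (b - a) (f a) (f b) :=
  ⟨fun t => f (a + t), rfl, by simp only [Nat.add_sub_cancel' hab],
    fun t ht => hf (a + t) (by omega)⟩

theorem hasWalk_succ_iff : HasWalk E (k + 1) i j ↔ ∃ l, HasWalk E k i l ∧ E l j := by
  constructor
  · rintro ⟨f, rfl, rfl, hf⟩
    exact ⟨f k, by simpa using hasWalk_segment hf k.zero_le k.le_succ, hf k k.lt_succ_self⟩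
  · rintro ⟨l, ⟨f, rfl, rfl, hf⟩, hl⟩
    refine ⟨Function.update f (k + 1) j, by simp, by simp, fun t ht => ?_⟩
    rcases Nat.lt_succ_iff_lt_or_eq.1 ht with ht | rfl
    · simpa [Function.update_of_ne (show t ≠ k + 1 by omega),
        Function.update_of_ne (show t + 1 ≠ k + 1 by omega)] using hf t ht
    · simpa [Function.update_of_ne (show t ≠ t + 1 by omega)] using hl

theorem HasWalk.append (h₁ : HasWalk E a i j) (h₂ : HasWalk E b j l) :
    HasWalk E (a + b) i l := by
  induction b generalizing l with
  | zero => rwa [← hasWalk_zero_iff.1 h₂]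
  | succ b ih =>
    obtain ⟨m, hjm, hml⟩ := hasWalk_succ_iff.1 h₂
    exact hasWalk_succ_iff.2 ⟨m, ih hjm, hml⟩

theorem hasWalk_add_iff : HasWalk E (a + b) i l ↔ ∃ j, HasWalk E a i j ∧ HasWalk E b j l := by
  constructor
  · rintro ⟨f, rfl, rfl, hf⟩
    exact ⟨f a, by simpa using hasWalk_segment hf a.zero_le (by omega),
      by simpa using hasWalk_segment hf (Nat.le_add_right a b) le_rfl⟩
  · rintro ⟨j, h₁, h₂⟩
    exact h₁.append h₂

theorem hasWalk_hasWalk_iff {s : ℕ} : HasWalk (HasWalk E s) k i j ↔ HasWalk E (s * k) i j := by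
  induction k generalizing j with
  | zero => simp only [hasWalk_zero_iff, Nat.mul_zero]
  | succ k ih => simp only [hasWalk_succ_iff, ih, Nat.mul_succ, hasWalk_add_iff]

theorem exists_hasWalk_mem {C : Set V} (hC : ∀ w ∈ C, ∃ w' ∈ C, E w w') (hi : i ∈ C) (k : ℕ) :
    ∃ j ∈ C, HasWalk E k i j := by
  induction k with
  | zero => exact ⟨i, hi, hasWalk_zero i⟩
  | succ k ih =>
    obtain ⟨j, hj, hij⟩ := ih
    obtain ⟨l, hl, hjl⟩ := hC j hj
    exact ⟨l, hl, hasWalk_succ_iff.2 ⟨j, hij, hjl⟩⟩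

end Walk

theorem injOn_range_of_forall_lt_ne {α : Type*} {f : ℕ → α} {d : ℕ}
    (h : ∀ a b, a < b → b < d → f a ≠ f b) : Set.InjOn f (Finset.range d) := by
  intro a ha b hb hab
  simp only [Finset.coe_range, Set.mem_Iio] at ha hb
  by_contra hne
  rcases Nat.lt_or_gt_of_ne hne with hlt | hlt
  exacts [h a b hlt hb hab, h b a hlt ha hab.symm]

section Finite

variable {V : Type*} [Fintype V] {E : V → V → Prop} {i j u w v : V} {c k : ℕ}

theorem exists_hasWalk_add_card_le (S : Finset V) (h : HasWalk E k i j) (hj : j ∈ S) :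
    ∃ d, d + S.card ≤ Fintype.card V ∧ ∃ j ∈ S, HasWalk E d i j := by
  classical
  have hex : ∃ d, ∃ j ∈ S, HasWalk E d i j := ⟨k, j, hj, h⟩
  refine ⟨Nat.find hex, ?_, Nat.find_spec hex⟩
  obtain ⟨j, hj, f, rfl, rfl, hf⟩ := Nat.find_spec hex
  set d := Nat.find hex
  have hout : ∀ t < d, f t ∉ S := fun t ht hS =>
    Nat.find_min hex ht ⟨f t, hS, by simpa using hasWalk_segment hf t.zero_le ht.le⟩
  have hinj : Set.InjOn f (Finset.range d) := by
    refine injOn_range_of_forall_lt_ne fun a b hab hbd heq => ?_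
    have htail := hasWalk_segment hf hbd.le le_rfl
    rw [← heq] at htail
    have hshort := (hasWalk_segment hf a.zero_le (hab.trans hbd).le).append htail
    exact Nat.find_min hex (show a - 0 + (d - b) < d by omega) ⟨f d, hj, hshort⟩
  have hdisj : Disjoint ((Finset.range d).image f) S := by
    simp only [Finset.disjoint_left, Finset.mem_image, Finset.mem_range]
    rintro _ ⟨t, ht, rfl⟩
    exact hout t ht
  calc d + S.card = ((Finset.range d).image f ∪ S).card := by
        rw [Finset.card_union_of_disjoint hdisj, Finset.card_image_of_injOn hinj, Finset.card_range]
    _ ≤ Fintype.card V := Finset.card_le_univ _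

theorem HasWalk.exists_cycle_finset (h : HasWalk E c u u) (hc : 0 < c) :
    ∃ s, 0 < s ∧ s ≤ c ∧ ∃ C : Finset V, C.card = s ∧ (∀ w ∈ C, HasWalk E s w w) ∧
      ∀ w ∈ C, ∃ w' ∈ C, E w w' := by
  classical
  have hex : ∃ s, 0 < s ∧ ∃ u, HasWalk E s u u := ⟨c, hc, u, h⟩
  obtain ⟨hs, u₀, f, hf0, hfs, hf⟩ := Nat.find_spec hex
  set s := Nat.find hex
  have hclosed : f s = f 0 := hfs.trans hf0.symm
  refine ⟨s, hs, Nat.find_min' hex ⟨hc, u, h⟩, (Finset.range s).image f, ?_, ?_, ?_⟩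
  · rw [Finset.card_image_of_injOn, Finset.card_range]
    refine injOn_range_of_forall_lt_ne fun a b hab hbs heq => ?_
    have hloop := hasWalk_segment hf hab.le hbs.le
    rw [← heq] at hloop
    exact Nat.find_min hex (show b - a < s by omega) ⟨by omega, f a, hloop⟩
  · simp only [Finset.mem_image, Finset.mem_range]
    rintro _ ⟨a, has, rfl⟩
    have hback := hasWalk_segment hf has.le le_rfl
    rw [hclosed] at hback
    have hrot := hback.append (hasWalk_segment hf a.zero_le has.le)
    rwa [Nat.sub_zero, Nat.sub_add_cancel has.le] at hrot
  · simp only [Finset.mem_image, Finset.mem_range, exists_exists_and_eq_and]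
    rintro _ ⟨a, has, rfl⟩
    rcases (Nat.succ_le_of_lt has).lt_or_eq with hlt | heq
    · exact ⟨a + 1, hlt, hf a has⟩
    · exact ⟨0, hs, hclosed ▸ heq ▸ hf a has⟩

/-- Closing up at `v` makes the length a multiple of `s`; read as a walk of the `s`-step relation
it shortens to at most `card V - 1` steps, and the `s`-loop at `w` pads it back to exactly that. -/
theorem hasWalk_mul_card_sub_one {s d : ℕ} (hs : 0 < s) (hw : HasWalk E s w w)
    (hwv : HasWalk E d w v) (hv : ∃ N, ∀ m ≥ N, HasWalk E m v v) :
    HasWalk E (s * (Fintype.card V - 1)) w v := by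
  obtain ⟨N, hN⟩ := hv
  have hNd : N + d ≤ s * (N + d) := Nat.le_mul_of_pos_left _ hs
  have hlong : HasWalk E (s * (N + d)) w v := by
    simpa [Nat.add_sub_cancel' (le_of_add_le_right hNd)] using
      hwv.append (hN (s * (N + d) - d) (Nat.le_sub_of_add_le hNd))
  obtain ⟨m, hm, _, hv', hshort⟩ :=
    exists_hasWalk_add_card_le {v} (hasWalk_hasWalk_iff.2 hlong) (Finset.mem_singleton_self v)
  rw [Finset.mem_singleton] at hv'
  subst hv'
  rw [Finset.card_singleton] at hm
  rw [← hasWalk_hasWalk_iff, ← Nat.sub_add_cancel (show m ≤ Fintype.card V - 1 by omega)]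
  exact (hasWalk_of_rel_self hw _).append hshort

end Finite

section ClosedWalks

variable {V : Type*} {E : V → V → Prop} {u v : V} {c : ℕ}

def closedWalkLengths (E : V → V → Prop) (v : V) : AddSubmonoid ℕ where
  carrier := {m | HasWalk E m v v}
  zero_mem' := hasWalk_zero v
  add_mem' := HasWalk.append

theorem setGcd_closedWalkLengths_dvd (hsc : ∀ i j, ∃ k, HasWalk E k i j) (v : V)
    (h : HasWalk E c u u) : Nat.setGcd (closedWalkLengths E v) ∣ c := by
  obtain ⟨p, hp⟩ := hsc v u
  obtain ⟨q, hq⟩ := hsc u v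
  have h₁ : p + q ∈ closedWalkLengths E v := hp.append hq
  have h₂ : p + c + q ∈ closedWalkLengths E v := (hp.append h).append hq
  have hdvd := Nat.dvd_sub (Nat.setGcd_dvd_of_mem h₂) (Nat.setGcd_dvd_of_mem h₁)
  rwa [show p + c + q - (p + q) = c by omega] at hdvd

theorem exists_forall_ge_hasWalk_self (h : Nat.setGcd (closedWalkLengths E v) = 1) :
    ∃ N, ∀ m ≥ N, HasWalk E m v v := by
  obtain ⟨N, hN⟩ := Nat.exists_mem_closure_of_ge (closedWalkLengths E v : Set ℕ)
  rw [AddSubmonoid.closure_eq, h] at hN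
  exact ⟨N, fun m hm => hN m hm (one_dvd m)⟩

end ClosedWalks

section FinWalk

variable {n k : ℕ} {E : Fin n → Fin n → Prop} {f : Fin (k + 1) → Fin n}

theorem hasWalk_iff_exists_isGWalk {i j : Fin n} :
    HasWalk E k i j ↔ ∃ f : Fin (k + 1) → Fin n, IsGWalk E f ∧ f 0 = i ∧ f (Fin.last k) = j := by
  constructor
  · rintro ⟨f, rfl, rfl, hf⟩
    exact ⟨fun t => f t, fun t => hf t t.isLt, rfl, rfl⟩
  · rintro ⟨f, hf, rfl, rfl⟩
    refine ⟨fun t => f ⟨min t k, by omega⟩, rfl, by simp [Fin.last], fun t ht => ?_⟩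
    simpa [Fin.ext_iff, Nat.min_eq_left ht.le, Nat.min_eq_left ht] using hf ⟨t, ht⟩

theorem IsGCycle.hasWalk (h : IsGCycle E f) : HasWalk E k (f 0) (f 0) :=
  hasWalk_iff_exists_isGWalk.2 ⟨f, h.2.1, rfl, h.2.2.1.symm⟩

theorem IsGCycle.length_le (h : IsGCycle E f) : k ≤ n := by
  simpa using Fintype.card_le_of_injective _ h.2.2.2

theorem exists_isGCycle_length_lt (hn : 2 ≤ n)
    (hprim : ∀ m : ℕ, (∀ (k : ℕ) (f : Fin (k + 1) → Fin n), IsGCycle E f → m ∣ k) → m = 1) :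
    ∃ k < n, ∃ f : Fin (k + 1) → Fin n, IsGCycle E f := by
  by_contra! h
  have hn1 := hprim n fun k f hf =>
    (le_antisymm hf.length_le (not_lt.1 fun hk => h k hk f hf)) ▸ dvd_rfl
  omega

end FinWalk

theorem wielandt_bound {n : ℕ} (hn : 2 ≤ n) (E : Fin n → Fin n → Prop)
    (hsc : ∀ i j : Fin n, ∃ (k : ℕ) (f : Fin (k + 1) → Fin n),
      IsGWalk E f ∧ f 0 = i ∧ f (Fin.last k) = j)
    (hprim : ∀ m : ℕ,
      (∀ (k : ℕ) (f : Fin (k + 1) → Fin n), IsGCycle E f → m ∣ k) → m = 1) :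
    ∀ i j : Fin n, ∀ k, (n - 1) ^ 2 + 1 ≤ k →
      ∃ f : Fin (k + 1) → Fin n, IsGWalk E f ∧ f 0 = i ∧ f (Fin.last k) = j := by
  have hconn : ∀ i j : Fin n, ∃ k, HasWalk E k i j := fun i j => by
    obtain ⟨k, hk⟩ := hsc i j
    exact ⟨k, hasWalk_iff_exists_isGWalk.2 hk⟩
  intro i j k hk
  obtain ⟨c, hcn, g, hg⟩ := exists_isGCycle_length_lt hn hprim
  obtain ⟨s, hs, hsc_le, C, hC, hCs, hCE⟩ := hg.hasWalk.exists_cycle_finset hg.1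
  obtain ⟨w, hw⟩ := Finset.card_pos.1 (hC ▸ hs)
  obtain ⟨_, hiw⟩ := hconn i w
  obtain ⟨d, hd, w₀, hw₀, hiw₀⟩ := exists_hasWalk_add_card_le C hiw hw
  obtain ⟨w₁, hw₁, hw₀w₁⟩ := exists_hasWalk_mem hCE hw₀ (k - d - s * (n - 1))
  obtain ⟨_, hpath⟩ := hconn w₁ j
  have hjj := exists_forall_ge_hasWalk_self
    (hprim _ fun _ _ hf => setGcd_closedWalkLengths_dvd hconn j hf.hasWalk)
  have hw₁j := hasWalk_mul_card_sub_one hs (hCs w₁ hw₁) hpath hjj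
  rw [Fintype.card_fin] at hw₁j hd
  have hlen : d + (k - d - s * (n - 1)) + s * (n - 1) = k := by
    obtain ⟨m, rfl⟩ : ∃ m, n = m + 1 := ⟨n - 1, by omega⟩
    simp only [Nat.add_sub_cancel] at hk ⊢
    have hdk : d + s * m ≤ k := by nlinarith
    omega
  exact hasWalk_iff_exists_isGWalk.1 (hlen ▸ (hiw₀.append hw₀w₁).append hw₁j)
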